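/- Let σ > 0 and 1 ≤ p ≤ ∞. There exist a constant c > 0 and an integer l₀ ≥ 4 such that for every integer l ≥ l₀ and all sufficiently large n, ‖K₁ + K₂‖_{L^p(ℝ)} ≥ c·2^{-lnσ}, where K₁(x) = 2·2^{-lnσ} ψ(x)² cos((33/24)·2^{ln} x) cos((33/24) x) and K₂(x) = 2 Σ_{m=1}^{n−1} 2^{-l(n+m)σ} ψ(x)² cos((33/24)·2^{ln} x) cos((33/24)·2^{lm} x). -/

import Mathlib

open MeasureTheory Filter Real
open scoped ENNReal

noncomputable def psi (ψhat : ℝ → ℝ) : ℝ → ℝ :=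
  fun x => (1 / (2 * π)) * ∫ ξ : ℝ, ψhat ξ * Real.cos (x * ξ)

def IsPsiHat (ψhat : ℝ → ℝ) : Prop :=
  ContDiff ℝ (⊤ : ℕ∞) ψhat ∧
  (∀ ξ, ψhat (-ξ) = ψhat ξ) ∧
  (∀ ξ, 0 ≤ ψhat ξ) ∧
  (∀ ξ, ψhat ξ ≤ 1) ∧
  (∀ ξ : ℝ, 1 / 2 < |ξ| → ψhat ξ = 0) ∧
  (∀ ξ : ℝ, |ξ| ≤ 1 / 4 → ψhat ξ = 1)

/-- `K₁(x) = 2·2^{-lnσ} ψ(x)² cos((33/24)·2^{ln} x) cos((33/24) x)`. -/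
noncomputable def K1 (ψhat : ℝ → ℝ) (σ : ℝ) (l n : ℕ) : ℝ → ℝ :=
  fun x => 2 * (2 : ℝ) ^ (-((l : ℝ) * (n : ℝ)) * σ) * (psi ψhat x) ^ 2 *
    Real.cos ((33 / 24) * 2 ^ (l * n) * x) * Real.cos ((33 / 24) * x)

/-- `K₂(x) = 2 Σ_{m=1}^{n−1} 2^{-l(n+m)σ} ψ(x)² cos((33/24)·2^{ln} x) cos((33/24)·2^{lm} x)`. -/
noncomputable def K2 (ψhat : ℝ → ℝ) (σ : ℝ) (l n : ℕ) : ℝ → ℝ :=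
  fun x => 2 * ∑ m ∈ Finset.Icc 1 (n - 1),
    (2 : ℝ) ^ (-((l : ℝ) * ((n : ℝ) + (m : ℝ))) * σ) * (psi ψhat x) ^ 2 *
      Real.cos ((33 / 24) * 2 ^ (l * n) * x) * Real.cos ((33 / 24) * 2 ^ (l * m) * x)

section Aux

variable {ψhat : ℝ → ℝ}

lemma psihat_mul_integrable (h : IsPsiHat ψhat) {g : ℝ → ℝ} (hg : Continuous g) :
    Integrable (fun ξ => ψhat ξ * g ξ) := by
  apply Continuous.integrable_of_hasCompactSupport (h.1.continuous.mul hg)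
  apply HasCompactSupport.intro (isCompact_Icc (a := (-1:ℝ)) (b := 1))
  intro ξ hξ
  have h1 : (1:ℝ)/2 < |ξ| := by
    rw [Set.mem_Icc, not_and_or, not_le, not_le] at hξ
    rw [lt_abs]
    rcases hξ with h1 | h1
    · right; linarith
    · left; linarith
  simp [h.2.2.2.2.1 ξ h1]

lemma psihat_integrable (h : IsPsiHat ψhat) : Integrable ψhat := by
  simpa using psihat_mul_integrable h continuous_const (g := fun _ => (1:ℝ))

lemma psi_continuous (h : IsPsiHat ψhat) : Continuous (psi ψhat) := by
  unfold psi
  apply continuous_const.mul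
  apply continuous_of_dominated (bound := ψhat)
  · intro x
    exact (h.1.continuous.mul (by fun_prop)).aestronglyMeasurable
  · intro x
    filter_upwards with ξ
    rw [Real.norm_eq_abs, abs_mul, abs_of_nonneg (h.2.2.1 ξ)]
    calc ψhat ξ * |Real.cos (x * ξ)| ≤ ψhat ξ * 1 :=
          mul_le_mul_of_nonneg_left (Real.abs_cos_le_one _) (h.2.2.1 ξ)
      _ = ψhat ξ := mul_one _
  · exact psihat_integrable h
  · filter_upwards with ξ; fun_prop

lemma psi_zero_eq (h : IsPsiHat ψhat) : psi ψhat 0 = (1 / (2 * π)) * ∫ ξ : ℝ, ψhat ξ := by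
  simp [psi]

lemma psihat_integral_pos (h : IsPsiHat ψhat) : (1:ℝ)/2 ≤ ∫ ξ : ℝ, ψhat ξ := by
  have h1 : ∫ ξ in Set.Icc (-(1:ℝ)/4) (1/4), ψhat ξ = 1/2 := by
    rw [setIntegral_congr_fun measurableSet_Icc (g := fun _ => (1:ℝ))]
    · simp [Real.volume_Icc]; norm_num
    · intro ξ hξ
      apply h.2.2.2.2.2
      rw [Set.mem_Icc] at hξ
      rw [abs_le]; constructor <;> linarith [hξ.1, hξ.2]
  rw [← h1]
  exact setIntegral_le_integral (psihat_integrable h)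
    (Filter.Eventually.of_forall fun ξ => h.2.2.1 ξ)

lemma psi_zero_pos (h : IsPsiHat ψhat) : 0 < psi ψhat 0 := by
  rw [psi_zero_eq h]
  have := psihat_integral_pos h
  have hπ := Real.pi_pos
  positivity

lemma psi_lower (h : IsPsiHat ψhat) {x : ℝ} (hx : x ∈ Set.Icc (0:ℝ) (1/2)) :
    31/32 * psi ψhat 0 ≤ psi ψhat x := by
  have hx2 : x^2 ≤ 1/4 := by
    rcases Set.mem_Icc.mp hx with ⟨h0, h1⟩; nlinarith
  have hmono : ∫ ξ : ℝ, (ψhat ξ - ψhat ξ * Real.cos (x * ξ)) ≤ ∫ ξ : ℝ, ψhat ξ * (1/32) := by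
    apply integral_mono
    · exact (psihat_integrable h).sub (psihat_mul_integrable h (by fun_prop))
    · exact (psihat_integrable h).mul_const _
    · intro ξ
      rcases le_or_gt |ξ| (1/2) with hξ | hξ
      · have hcos : 1 - Real.cos (x * ξ) ≤ 1/32 := by
          have := Real.one_sub_sq_div_two_le_cos (x := x * ξ)
          have hξ2 : ξ^2 ≤ 1/4 := by
            rw [abs_le] at hξ; nlinarith [hξ.1, hξ.2]
          nlinarith [sq_nonneg x, sq_nonneg ξ, mul_pow x ξ 2]
        have hnn := h.2.2.1 ξ
        simp only
        nlinarith [mul_le_mul_of_nonneg_left hcos hnn]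
      · simp [h.2.2.2.2.1 ξ hξ]
  rw [integral_sub (psihat_integrable h) (psihat_mul_integrable h (by fun_prop)),
      integral_mul_const] at hmono
  have hI := psihat_integral_pos h
  have hπ := Real.pi_pos
  simp only [psi, zero_mul, Real.cos_zero, mul_one]
  have key : 31/32 * ∫ ξ : ℝ, ψhat ξ ≤ ∫ ξ : ℝ, ψhat ξ * Real.cos (x * ξ) := by linarith
  have hc : 0 < 1 / (2*π) := by positivity
  calc 31/32 * ((1/(2*π)) * ∫ ξ : ℝ, ψhat ξ) = (1/(2*π)) * (31/32 * ∫ ξ : ℝ, ψhat ξ) := by ring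
    _ ≤ (1/(2*π)) * ∫ ξ : ℝ, ψhat ξ * Real.cos (x * ξ) :=
        mul_le_mul_of_nonneg_left key hc.le

lemma cos_sq_interval_lower (A : ℝ) (hA : 16 ≤ A) :
    (1:ℝ)/8 ≤ ∫ x in (0:ℝ)..(1/2), Real.cos (A*x)^2 := by
  have hApos : (0:ℝ) < A := by linarith
  have h' := intervalIntegral.mul_integral_comp_mul_left (a := (0:ℝ)) (b := 1/2) (c := A)
      (f := fun y => Real.cos y ^ 2)
  rw [integral_cos_sq] at h'
  have hval : ∫ x in (0:ℝ)..(1/2), Real.cos (A*x)^2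
      = A⁻¹ * ((Real.cos (A*(1/2)) * Real.sin (A*(1/2)) - Real.cos (A*0) * Real.sin (A*0)
          + A*(1/2) - A*0)/2) := by
    field_simp at h' ⊢
    linarith
  rw [hval, inv_mul_eq_div, le_div_iff₀ hApos]
  have hs1 : -1 ≤ Real.cos (A*(1/2)) * Real.sin (A*(1/2)) := by
    nlinarith [Real.neg_one_le_sin (A*(1/2)), Real.sin_le_one (A*(1/2)),
      Real.neg_one_le_cos (A*(1/2)), Real.cos_le_one (A*(1/2))]
  rw [mul_zero, Real.sin_zero]
  nlinarith

/-- geometric-type bound for the tail sum -/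
lemma tail_sum_le (l : ℕ) (σ : ℝ) (hσ : 0 < σ) (n : ℕ)
    (hr0 : (2:ℝ) ^ (-(l:ℝ)*σ) ≤ 1/16) :
    ∑ m ∈ Finset.Icc 1 (n-1), (2:ℝ) ^ (-((l : ℝ) * (m : ℝ)) * σ) ≤ 1/4 := by
  have hr0pos : (0:ℝ) < (2:ℝ) ^ (-(l:ℝ)*σ) := Real.rpow_pos_of_pos two_pos _
  have hterm : ∀ m : ℕ, 1 ≤ m →
      (2:ℝ) ^ (-((l : ℝ) * (m : ℝ)) * σ) ≤ 2 * ((2:ℝ) ^ (-(l:ℝ)*σ)) * (1/2:ℝ)^m := by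
    intro m hm
    have he : (2:ℝ) ^ (-((l : ℝ) * (m : ℝ)) * σ) = ((2:ℝ) ^ (-(l:ℝ)*σ))^m := by
      rw [← Real.rpow_natCast ((2:ℝ) ^ (-(l:ℝ)*σ)) m, ← Real.rpow_mul (by norm_num)]
      congr 1; ring
    obtain ⟨k, rfl⟩ := Nat.exists_eq_add_of_le hm
    rw [he]
    calc ((2:ℝ) ^ (-(l:ℝ)*σ))^(1+k) = ((2:ℝ) ^ (-(l:ℝ)*σ)) * ((2:ℝ) ^ (-(l:ℝ)*σ))^k := by
          rw [pow_add, pow_one]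
      _ ≤ ((2:ℝ) ^ (-(l:ℝ)*σ)) * (1/2:ℝ)^k := by
          apply mul_le_mul_of_nonneg_left _ hr0pos.le
          exact pow_le_pow_left₀ hr0pos.le (by linarith) k
      _ = 2 * ((2:ℝ) ^ (-(l:ℝ)*σ)) * (1/2:ℝ)^(1+k) := by
          rw [pow_add, pow_one]; ring
  have hsub : Finset.Icc 1 (n-1) ⊆ Finset.range n := by
    intro m hm
    rw [Finset.mem_Icc] at hm
    rw [Finset.mem_range]
    omega
  calc ∑ m ∈ Finset.Icc 1 (n-1), (2:ℝ) ^ (-((l : ℝ) * (m : ℝ)) * σ)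
      ≤ ∑ m ∈ Finset.Icc 1 (n-1), 2 * ((2:ℝ) ^ (-(l:ℝ)*σ)) * (1/2:ℝ)^m :=
        Finset.sum_le_sum (fun m hm => hterm m (Finset.mem_Icc.mp hm).1)
    _ ≤ ∑ m ∈ Finset.range n, 2 * ((2:ℝ) ^ (-(l:ℝ)*σ)) * (1/2:ℝ)^m :=
        Finset.sum_le_sum_of_subset_of_nonneg hsub (fun m _ _ => by positivity)
    _ = 2 * ((2:ℝ) ^ (-(l:ℝ)*σ)) * ∑ m ∈ Finset.range n, (1/2:ℝ)^m := by
        rw [Finset.mul_sum]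
    _ ≤ 2 * ((2:ℝ) ^ (-(l:ℝ)*σ)) * 2 :=
        mul_le_mul_of_nonneg_left (sum_geometric_two_le n) (by positivity)
    _ ≤ 1/4 := by nlinarith

end Aux

set_option maxHeartbeats 2000000 in
/-- There are `c > 0` and `l₀ ≥ 4` such that for every `l ≥ l₀` and all sufficiently large `n`,
`‖K₁ + K₂‖_{L^p} ≥ c·2^{-lnσ}`. -/
theorem K1_add_K2_lower_bound (ψhat : ℝ → ℝ) (h : IsPsiHat ψhat)
    (σ : ℝ) (hσ : 0 < σ) (p : ℝ≥0∞) (hp : 1 ≤ p) :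
    ∃ c : ℝ, 0 < c ∧ ∃ l₀ : ℕ, 4 ≤ l₀ ∧ ∀ l : ℕ, l₀ ≤ l →
      ∀ᶠ n : ℕ in Filter.atTop,
        ENNReal.ofReal (c * (2 : ℝ) ^ (-((l : ℝ) * (n : ℝ)) * σ)) ≤
          eLpNorm (fun x : ℝ => K1 ψhat σ l n x + K2 ψhat σ l n x) p volume := by
  have hψ0 : 0 < psi ψhat 0 := psi_zero_pos h
  refine ⟨(psi ψhat 0)^2/16, by positivity, max 4 ⌈4/σ⌉₊, le_max_left _ _, ?_⟩
  intro l hl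
  have hl4 : 4 ≤ l := le_trans (le_max_left _ _) hl
  have hlσ : (4:ℝ) ≤ (l:ℝ) * σ := by
    have h1 : (4:ℝ)/σ ≤ (⌈4/σ⌉₊ : ℝ) := Nat.le_ceil _
    have h2 : ((max 4 ⌈4/σ⌉₊ : ℕ) : ℝ) ≤ (l : ℝ) := by exact_mod_cast hl
    have h3 : ((⌈4/σ⌉₊ : ℕ) : ℝ) ≤ ((max 4 ⌈4/σ⌉₊ : ℕ) : ℝ) := by
      exact_mod_cast le_max_right 4 ⌈4/σ⌉₊
    rw [div_le_iff₀ hσ] at h1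
    nlinarith
  have hr0 : (2:ℝ) ^ (-(l:ℝ)*σ) ≤ 1/16 := by
    have h1 : (2:ℝ) ^ (-(l:ℝ)*σ) ≤ (2:ℝ) ^ (-(4:ℝ)) :=
      Real.rpow_le_rpow_of_exponent_le one_le_two (by linarith)
    have h2 : (2:ℝ) ^ (-(4:ℝ)) = 1/16 := by
      rw [show (-(4:ℝ)) = ((-4:ℤ):ℝ) by norm_num, Real.rpow_intCast]; norm_num
    exact h1.trans h2.le
  filter_upwards [eventually_ge_atTop 1] with n hn
  -- abbreviations
  have hr : (0:ℝ) < (2:ℝ) ^ (-((l : ℝ) * (n : ℝ)) * σ) := Real.rpow_pos_of_pos two_pos _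
  set r : ℝ := (2:ℝ) ^ (-((l : ℝ) * (n : ℝ)) * σ) with hrdef
  set A : ℝ := (33/24) * (2:ℝ) ^ (l*n) with hAdef
  set F : ℝ → ℝ := fun x => Real.cos ((33/24) * x) +
      ∑ m ∈ Finset.Icc 1 (n-1), (2:ℝ) ^ (-((l : ℝ) * (m : ℝ)) * σ) *
        Real.cos ((33/24) * 2 ^ (l*m) * x) with hFdef
  -- representation
  have hterm2 : ∀ m : ℕ, (2:ℝ) ^ (-((l : ℝ) * ((n : ℝ) + (m : ℝ))) * σ)
      = r * (2:ℝ) ^ (-((l : ℝ) * (m : ℝ)) * σ) := by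
    intro m
    rw [hrdef, ← Real.rpow_add two_pos]
    congr 1; ring
  have hrepr : (fun x : ℝ => K1 ψhat σ l n x + K2 ψhat σ l n x)
      = fun x : ℝ => 2 * r * (psi ψhat x)^2 * Real.cos (A * x) * F x := by
    funext x
    have hK2 : K2 ψhat σ l n x = 2 * r * (psi ψhat x)^2 * Real.cos (A * x) *
        (∑ m ∈ Finset.Icc 1 (n-1), (2:ℝ) ^ (-((l : ℝ) * (m : ℝ)) * σ) *
          Real.cos ((33/24) * 2 ^ (l*m) * x)) := by
      simp only [K2, Finset.mul_sum]
      apply Finset.sum_congr rfl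
      intro m _
      rw [hterm2 m, hAdef]
      ring
    simp only [K1, hK2, hFdef, hAdef]
    ring
  rw [hrepr]
  -- pointwise lower bound on [0, 1/2]
  have hsum := tail_sum_le l σ hσ n hr0
  have hpt : ∀ x ∈ Set.Icc (0:ℝ) (1/2),
      (psi ψhat 0)^2/2 * r * Real.cos (A * x)^2 ≤
        ‖2 * r * (psi ψhat x)^2 * Real.cos (A * x) * F x‖ := by
    intro x hx
    have hψx := psi_lower h hx
    have hψxnn : 0 ≤ psi ψhat x := le_trans (by positivity) hψx
    have hψsq : (psi ψhat 0)^2/2 ≤ (psi ψhat x)^2 := by nlinarith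
    have hcos_ax : (3:ℝ)/4 ≤ Real.cos ((33/24) * x) := by
      have := Real.one_sub_sq_div_two_le_cos (x := (33/24) * x)
      rcases Set.mem_Icc.mp hx with ⟨h0, h1⟩
      nlinarith
    have hSx : |∑ m ∈ Finset.Icc 1 (n-1), (2:ℝ) ^ (-((l : ℝ) * (m : ℝ)) * σ) *
        Real.cos ((33/24) * 2 ^ (l*m) * x)| ≤ 1/4 := by
      calc |∑ m ∈ Finset.Icc 1 (n-1), (2:ℝ) ^ (-((l : ℝ) * (m : ℝ)) * σ) *
            Real.cos ((33/24) * 2 ^ (l*m) * x)|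
          ≤ ∑ m ∈ Finset.Icc 1 (n-1), |(2:ℝ) ^ (-((l : ℝ) * (m : ℝ)) * σ) *
            Real.cos ((33/24) * 2 ^ (l*m) * x)| := Finset.abs_sum_le_sum_abs _ _
        _ ≤ ∑ m ∈ Finset.Icc 1 (n-1), (2:ℝ) ^ (-((l : ℝ) * (m : ℝ)) * σ) := by
            apply Finset.sum_le_sum
            intro m _
            rw [abs_mul, abs_of_pos (Real.rpow_pos_of_pos two_pos _)]
            calc (2:ℝ) ^ (-((l : ℝ) * (m : ℝ)) * σ) * |Real.cos ((33/24) * 2 ^ (l*m) * x)|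
                ≤ (2:ℝ) ^ (-((l : ℝ) * (m : ℝ)) * σ) * 1 :=
                  mul_le_mul_of_nonneg_left (Real.abs_cos_le_one _)
                    (Real.rpow_pos_of_pos two_pos _).le
              _ = _ := mul_one _
        _ ≤ 1/4 := hsum
    have hF : 1/2 ≤ F x := by
      have := abs_le.mp hSx
      simp only [hFdef]
      linarith [this.1]
    have hFabs : 1/2 ≤ |F x| := le_trans hF (le_abs_self _)
    have hcsq : Real.cos (A * x)^2 ≤ |Real.cos (A * x)| := by
      have h1 := Real.abs_cos_le_one (A * x)
      nlinarith [abs_nonneg (Real.cos (A * x)), sq_abs (Real.cos (A * x))]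
    rw [Real.norm_eq_abs, abs_mul, abs_mul, abs_mul,
        abs_of_nonneg (by positivity : (0:ℝ) ≤ 2 * r), abs_of_nonneg (sq_nonneg (psi ψhat x))]
    have hYnn : 0 ≤ 2 * r * ((psi ψhat x)^2 * |Real.cos (A * x)|) := by positivity
    calc (psi ψhat 0)^2/2 * r * Real.cos (A * x)^2
        = 2 * r * ((psi ψhat 0)^2/2 * Real.cos (A * x)^2) * (1/2) := by ring
      _ ≤ 2 * r * ((psi ψhat x)^2 * |Real.cos (A * x)|) * |F x| := by
          apply mul_le_mul _ hFabs (by norm_num) hYnn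
          apply mul_le_mul_of_nonneg_left _ (by positivity : (0:ℝ) ≤ 2 * r)
          exact mul_le_mul hψsq hcsq (sq_nonneg _) (sq_nonneg _)
      _ = 2 * r * (psi ψhat x)^2 * |Real.cos (A * x)| * |F x| := by ring
  -- continuity
  have hFc : Continuous F := by
    rw [hFdef]
    exact (Continuous.add (by fun_prop)
      (continuous_finset_sum _ (fun m _ => by fun_prop)))
  have hfc : Continuous (fun x : ℝ => 2 * r * (psi ψhat x)^2 * Real.cos (A * x) * F x) := by
    exact ((((continuous_const.mul ((psi_continuous h).pow 2))).mul (by fun_prop)).mul hFc)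
  -- frequency lower bound
  have h2pow : (16:ℝ) ≤ 2 ^ (l*n) := by
    calc (16:ℝ) = 2^(4:ℕ) := by norm_num
      _ ≤ 2 ^ (l*n) := by
        apply pow_le_pow_right₀ one_le_two
        calc 4 ≤ l := hl4
          _ = l*1 := (mul_one l).symm
          _ ≤ l*n := Nat.mul_le_mul_left l hn
  have hA16 : 16 ≤ A := by rw [hAdef]; nlinarith
  have hIval : (1:ℝ)/8 ≤ ∫ x in (0:ℝ)..(1/2), Real.cos (A*x)^2 := cos_sq_interval_lower A hA16
  have hIcc : ∫ x in Set.Icc (0:ℝ) (1/2), Real.cos (A*x)^2 =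
      ∫ x in (0:ℝ)..(1/2), Real.cos (A*x)^2 := by
    rw [intervalIntegral.integral_of_le (by norm_num), integral_Icc_eq_integral_Ioc]
  -- L¹ lower bound on the restricted measure
  have hgint : IntegrableOn (fun x : ℝ => (psi ψhat 0)^2/2 * r * Real.cos (A*x)^2)
      (Set.Icc (0:ℝ) (1/2)) volume :=
    Continuous.integrableOn_Icc (by fun_prop)
  have key1 : ENNReal.ofReal ((psi ψhat 0)^2/16 * r) ≤
      eLpNorm (fun x : ℝ => 2 * r * (psi ψhat x)^2 * Real.cos (A * x) * F x) 1
        (volume.restrict (Set.Icc (0:ℝ) (1/2))) := by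
    rw [eLpNorm_one_eq_lintegral_enorm]
    have step1 : (psi ψhat 0)^2/16 * r ≤
        ∫ x in Set.Icc (0:ℝ) (1/2), (psi ψhat 0)^2/2 * r * Real.cos (A*x)^2 := by
      rw [MeasureTheory.integral_const_mul, hIcc]
      have h5 : (psi ψhat 0)^2/2 * r * (1/8) ≤
          (psi ψhat 0)^2/2 * r * ∫ x in (0:ℝ)..(1/2), Real.cos (A*x)^2 :=
        mul_le_mul_of_nonneg_left hIval (mul_nonneg (by positivity) hr.le)
      linarith
    calc ENNReal.ofReal ((psi ψhat 0)^2/16 * r)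
        ≤ ENNReal.ofReal (∫ x in Set.Icc (0:ℝ) (1/2),
            (psi ψhat 0)^2/2 * r * Real.cos (A*x)^2) := ENNReal.ofReal_le_ofReal step1
      _ = ∫⁻ x in Set.Icc (0:ℝ) (1/2),
            ENNReal.ofReal ((psi ψhat 0)^2/2 * r * Real.cos (A*x)^2) :=
          ofReal_integral_eq_lintegral_ofReal hgint
            (Filter.Eventually.of_forall fun x =>
              mul_nonneg (mul_nonneg (by positivity) hr.le) (sq_nonneg _))
      _ ≤ ∫⁻ x in Set.Icc (0:ℝ) (1/2),
            ‖2 * r * (psi ψhat x)^2 * Real.cos (A * x) * F x‖₊ := by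
          apply lintegral_mono_ae
          filter_upwards [ae_restrict_mem measurableSet_Icc] with x hx
          rw [← enorm_eq_nnnorm, ← ofReal_norm]
          exact ENNReal.ofReal_le_ofReal (hpt x hx)
  -- comparison of exponents and measures
  have hexp : (0:ℝ) ≤ 1/(1:ℝ≥0∞).toReal - 1/p.toReal := by
    rw [ENNReal.toReal_one]
    rcases eq_or_ne p ∞ with hp' | hp'
    · rw [hp']
      simp only [ENNReal.toReal_top]
      norm_num
    · have h1 : (1:ℝ) ≤ p.toReal := by
        rw [← ENNReal.toReal_one]
        exact ENNReal.toReal_mono hp' hp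
      have h2 : 1/p.toReal ≤ 1 := by
        rw [div_le_one (by linarith)]; linarith
      linarith
  have hμ1 : (volume.restrict (Set.Icc (0:ℝ) (1/2))) Set.univ ≤ 1 := by
    rw [Measure.restrict_apply_univ, Real.volume_Icc]
    exact ENNReal.ofReal_le_one.mpr (by norm_num)
  calc ENNReal.ofReal ((psi ψhat 0)^2/16 * r)
      ≤ eLpNorm (fun x : ℝ => 2 * r * (psi ψhat x)^2 * Real.cos (A * x) * F x) 1
          (volume.restrict (Set.Icc (0:ℝ) (1/2))) := key1
    _ ≤ eLpNorm (fun x : ℝ => 2 * r * (psi ψhat x)^2 * Real.cos (A * x) * F x) p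
          (volume.restrict (Set.Icc (0:ℝ) (1/2))) *
        ((volume.restrict (Set.Icc (0:ℝ) (1/2))) Set.univ) ^ (1/(1:ℝ≥0∞).toReal - 1/p.toReal) :=
        eLpNorm_le_eLpNorm_mul_rpow_measure_univ hp hfc.aestronglyMeasurable
    _ ≤ eLpNorm (fun x : ℝ => 2 * r * (psi ψhat x)^2 * Real.cos (A * x) * F x) p
          (volume.restrict (Set.Icc (0:ℝ) (1/2))) * 1 :=
        mul_le_mul_right (ENNReal.rpow_le_one hμ1 hexp) _
    _ = eLpNorm (fun x : ℝ => 2 * r * (psi ψhat x)^2 * Real.cos (A * x) * F x) p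
          (volume.restrict (Set.Icc (0:ℝ) (1/2))) := mul_one _
    _ ≤ eLpNorm (fun x : ℝ => 2 * r * (psi ψhat x)^2 * Real.cos (A * x) * F x) p volume :=
        eLpNorm_mono_measure _ Measure.restrict_le_self
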